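/- Let n ≥ 6 and let α, β be distinct positive roots of A_{n−1}. If w ∈ S_n is such that w·(−3α−β) = w(−3α−β+ρ) − ρ is dominant, then w·(−3α−β) = 0. -/

import Mathlib

/-- ρ = (n−1, n−2, …, 1, 0) for type A_{n−1} realized in ℤ^n. -/
def weylRho (n : ℕ) : Fin n → ℤ := fun i => (n : ℤ) - 1 - (i : ℕ)

/-- The action of `w ∈ S_n` on weights: `w(λ)_i = λ_{w⁻¹(i)}`. -/
def wAct {n : ℕ} (w : Equiv.Perm (Fin n)) (lam : Fin n → ℤ) : Fin n → ℤ :=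
  fun i => lam (w⁻¹ i)

/-- The dot action `w·λ = w(λ+ρ) − ρ`. -/
def dotAct {n : ℕ} (w : Equiv.Perm (Fin n)) (lam : Fin n → ℤ) : Fin n → ℤ :=
  fun i => lam (w⁻¹ i) + weylRho n (w⁻¹ i) - weylRho n i

/-- `λ` is dominant iff `λ_1 ≥ λ_2 ≥ ⋯ ≥ λ_n`. -/
def IsDominant {n : ℕ} (lam : Fin n → ℤ) : Prop :=
  ∀ i j : Fin n, i ≤ j → lam j ≤ lam i

/-- The root `e_i − e_j`. -/
def posRoot {n : ℕ} (i j : Fin n) : Fin n → ℤ :=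
  fun k => (if k = i then 1 else 0) - (if k = j then 1 else 0)

/-- Positive roots of A_{n−1}: `e_i − e_j` with `i < j`. -/
def IsPosRoot {n : ℕ} (x : Fin n → ℤ) : Prop :=
  ∃ i j : Fin n, i < j ∧ x = posRoot i j

/-- Negative roots of A_{n−1}. -/
def IsNegRoot {n : ℕ} (x : Fin n → ℤ) : Prop :=
  ∃ i j : Fin n, i < j ∧ x = -(posRoot i j)

/-- The length ℓ(w): the number of positive roots sent to negative roots by `w`,
i.e. the number of inversions of `w`. -/
def weylLen {n : ℕ} (w : Equiv.Perm (Fin n)) : ℕ :=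
  (Finset.univ.filter (fun p : Fin n × Fin n => p.1 < p.2 ∧ w p.2 < w p.1)).card

/-!
If `w·λ` is dominant, then `w(λ + ρ)` is strictly decreasing, so `λ + ρ` has distinct entries.
For `λ = -3α - β` with `α = e_A - e_B`, an entry of `ρ - 3α - β` above `n - 1` can only occur at
position `B ≤ 3`, and a finite check then exhibits two equal entries among the first six; the
symmetry `i ↦ n - 1 - i` (that is, `-w₀`) turns this into the lower bound `0`. So the entries of
`λ + ρ` lie in `[0, n - 1]`. Then the first entry of `w·λ` is `≤ 0` and its last entry `≥ 0`, and
dominance squeezes every entry to `0`.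
-/

section Weyl

variable {n : ℕ} {w : Equiv.Perm (Fin n)} {lam : Fin n → ℤ}

lemma weylRho_strictAnti : StrictAnti (weylRho n) := fun i j hij => by
  simp only [weylRho]
  have : (i : ℕ) < j := hij
  omega

lemma strictAnti_add_weylRho_comp_of_isDominant (hdom : IsDominant (dotAct w lam)) :
    StrictAnti ((lam + weylRho n) ∘ w.symm) := fun i j hij => by
  have hρ := weylRho_strictAnti hij
  have hd := hdom i j hij.le
  simp only [dotAct, Function.comp_apply, Pi.add_apply, Equiv.Perm.inv_def] at hd ⊢
  linarith

lemma injective_add_weylRho_of_isDominant (hdom : IsDominant (dotAct w lam)) :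
    Function.Injective (lam + weylRho n) := by
  have h := (strictAnti_add_weylRho_comp_of_isDominant hdom).injective.comp w.injective
  rwa [Function.comp_assoc, Equiv.symm_comp_self, Function.comp_id] at h

lemma dotAct_eq_zero_of_isDominant (hdom : IsDominant (dotAct w lam))
    (hbound : ∀ k, 0 ≤ (lam + weylRho n) k ∧ (lam + weylRho n) k ≤ n - 1) :
    dotAct w lam = 0 := by
  funext i
  have hi := i.isLt
  have hfirst := hdom ⟨0, by omega⟩ i (Fin.le_def.mpr (Nat.zero_le _))
  have hlast := hdom i ⟨n - 1, by omega⟩ (Fin.le_def.mpr (by simp; omega))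
  have b0 := hbound (w⁻¹ ⟨0, by omega⟩)
  have bL := hbound (w⁻¹ ⟨n - 1, by omega⟩)
  simp only [dotAct, weylRho, Pi.add_apply, Pi.zero_apply] at hfirst hlast b0 bL ⊢
  omega

end Weyl

section Perturbation

/-- For `α = e_A - e_B` and `β = e_C - e_D`, the entry `(ρ - 3α - β)_m - (n - 1)`;
it does not depend on `n`. -/
def perturbedRho (A B C D m : ℕ) : ℤ :=
  -m - 3 * (if m = A then 1 else 0) + 3 * (if m = B then 1 else 0)
    - (if m = C then 1 else 0) + (if m = D then 1 else 0)

variable {A B C D m : ℕ}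

lemma eq_and_le_three_of_perturbedRho_pos (hAB : A < B) (hCD : C < D)
    (h : 0 < perturbedRho A B C D m) : m = B ∧ B ≤ 3 := by
  unfold perturbedRho at h
  split_ifs at h <;> omega

lemma perturbedRho_min_six (hm : m < 6) :
    perturbedRho A B (min C 6) (min D 6) m = perturbedRho A B C D m := by
  unfold perturbedRho
  split_ifs <;> omega

/-- The explicit wall computations. Only positions `p < 6` are inspected, where an index `≥ 6`
behaves like `6`; hence the capping in `perturbedRho_min_six`. -/
theorem exists_perturbedRho_eq_of_pos : ∀ A B C D : Fin 7, A < B → C ≤ D →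
    ((A : ℕ) ≠ C ∨ (B : ℕ) ≠ D) → 0 < perturbedRho A B C D B →
    ∃ p q : Fin 6, p < q ∧ perturbedRho A B C D p = perturbedRho A B C D q := by
  decide +kernel

lemma perturbedRho_nonpos_of_injOn (hAB : A < B) (hCD : C < D) (hne : A ≠ C ∨ B ≠ D)
    (hinj : Set.InjOn (perturbedRho A B C D) (Set.Iio 6)) (m : ℕ) :
    perturbedRho A B C D m ≤ 0 := by
  by_contra! hpos
  obtain ⟨rfl, hB⟩ := eq_and_le_three_of_perturbedRho_pos hAB hCD hpos
  obtain ⟨p, q, hpq, heq⟩ := exists_perturbedRho_eq_of_pos ⟨A, by omega⟩ ⟨m, by omega⟩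
    ⟨min C 6, by omega⟩ ⟨min D 6, by omega⟩ hAB (show min C 6 ≤ min D 6 by omega)
    (show A ≠ min C 6 ∨ m ≠ min D 6 by omega)
    (show 0 < perturbedRho A m (min C 6) (min D 6) m by rwa [perturbedRho_min_six (by omega)])
  rw [perturbedRho_min_six p.isLt, perturbedRho_min_six q.isLt] at heq
  exact hpq.ne (Fin.ext (hinj p.isLt q.isLt heq))

lemma perturbedRho_reflect {n : ℕ} (hA : A < n) (hB : B < n) (hC : C < n) (hD : D < n)
    (hm : m < n) :
    perturbedRho A B C D (n - 1 - m) =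
      -(n - 1 : ℤ) - perturbedRho (n - 1 - B) (n - 1 - A) (n - 1 - D) (n - 1 - C) m := by
  have hcond {X : ℕ} (hX : X < n) : n - 1 - m = X ↔ m = n - 1 - X := by omega
  have hcast : ((n - 1 - m : ℕ) : ℤ) = n - 1 - m := by omega
  simp only [perturbedRho, hcond hA, hcond hB, hcond hC, hcond hD, hcast]
  ring

lemma neg_le_perturbedRho_of_injOn {n : ℕ} (hn : 6 ≤ n) (hAB : A < B) (hCD : C < D)
    (hne : A ≠ C ∨ B ≠ D) (hB : B < n) (hD : D < n)
    (hinj : Set.InjOn (perturbedRho A B C D) (Set.Iio n)) (hm : m < n) :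
    -(n - 1 : ℤ) ≤ perturbedRho A B C D m := by
  have hreflect {k : ℕ} (hk : k < n) :=
    perturbedRho_reflect (A := A) (C := C) (by omega) hB (by omega) hD hk
  have hinj' : Set.InjOn (perturbedRho (n - 1 - B) (n - 1 - A) (n - 1 - D) (n - 1 - C))
      (Set.Iio 6) := fun k₁ (hk₁ : k₁ < 6) k₂ (hk₂ : k₂ < 6) h => by
    have := hinj (show n - 1 - k₁ < n by omega) (show n - 1 - k₂ < n by omega)
      (by rw [hreflect (by omega), hreflect (by omega), h] :
        perturbedRho A B C D (n - 1 - k₁) = perturbedRho A B C D (n - 1 - k₂))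
    omega
  have := perturbedRho_nonpos_of_injOn (by omega) (by omega) (by omega) hinj' (n - 1 - m)
  rw [show m = n - 1 - (n - 1 - m) by omega, hreflect (by omega)]
  linarith

end Perturbation

lemma neg_three_smul_posRoot_sub_posRoot_add_weylRho_apply {n : ℕ} (a b c d k : Fin n) :
    (-(3 • posRoot a b) - posRoot c d + weylRho n) k = n - 1 + perturbedRho a b c d k := by
  simp only [Pi.add_apply, Pi.sub_apply, Pi.neg_apply, Pi.smul_apply, posRoot, weylRho,
    perturbedRho, Fin.ext_iff]
  split_ifs <;> push_cast <;> ring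

/-- For n ≥ 6 and distinct positive roots α, β of A_{n−1},
if w·(−3α−β) is dominant then it is zero. -/
theorem dot_neg_3a_b_dominant_eq_zero (n : ℕ) (hn : 6 ≤ n) (α β : Fin n → ℤ)
    (hα : IsPosRoot α) (hβ : IsPosRoot β) (hne : α ≠ β) (w : Equiv.Perm (Fin n))
    (hdom : IsDominant (dotAct w (-(3 • α) - β))) :
    dotAct w (-(3 • α) - β) = 0 := by
  obtain ⟨a, b, hab, rfl⟩ := hα
  obtain ⟨c, d, hcd, rfl⟩ := hβ
  have hne' : (a : ℕ) ≠ c ∨ (b : ℕ) ≠ d := by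
    by_contra! h
    exact hne (by rw [Fin.ext h.1, Fin.ext h.2])
  have hinj : Set.InjOn (perturbedRho a b c d) (Set.Iio n) := fun m₁ hm₁ m₂ hm₂ h => by
    have := injective_add_weylRho_of_isDominant hdom (a₁ := ⟨m₁, hm₁⟩) (a₂ := ⟨m₂, hm₂⟩)
      (by simp only [neg_three_smul_posRoot_sub_posRoot_add_weylRho_apply, h])
    exact congrArg Fin.val this
  refine dotAct_eq_zero_of_isDominant hdom fun k => ?_
  have hup := perturbedRho_nonpos_of_injOn hab hcd hne' (hinj.mono (Set.Iio_subset_Iio hn)) k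
  have hlow := neg_le_perturbedRho_of_injOn hn hab hcd hne' b.isLt d.isLt hinj k.isLt
  rw [neg_three_smul_posRoot_sub_posRoot_add_weylRho_apply]
  constructor <;> linarith
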